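/- Let M₀, M₁ be symmetric positive-definite real n×n matrices with decompositions M₀ = C₀ᵀC₀ and M₁ = C₁ᵀC₁ (C₀, C₁ invertible). Let t₀ ≤ t₁, and for each t ∈ [t₀,t₁] let f_t : ℝⁿ → ℝⁿ be continuously differentiable (representing the time-t solution map of the ODE x′ = F(t,x) started at time t₀). Let x₀ ∈ ℝⁿ, δ₀ > 0, X = B_{M₀}(x₀, δ₀). Suppose {D_t}_{t∈[t₀,t₁]} is a family of subsets of ℝ^{n×n} with Df_t(x) ∈ D_t for all x ∈ X and all t ∈ [t₀,t₁], and Λ > 0 satisfies Λ ≥ sqrt(λ_max((C₀ᵀ)⁻¹·Dᵀ·M₁·D·C₀⁻¹)) for every D that belongs to D_t for some t ∈ [t₀,t₁]. Then for all t ∈ [t₀,t₁] and all x ∈ X, f_t(x) ∈ B_{M₁}(f_t(x₀), Λ·δ₀). -/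

import Mathlib

/-
Writing `‖y‖_M = |C y|` for `M = CᵀC` makes both weighted norms Euclidean, and the ball
`X = B_{M₀}(x₀, δ₀)` is convex. Along the segment from `x₀` to `x ∈ X`, the derivative of
`s ↦ C₁ f_t(x₀ + s (x - x₀))` is `C₁ A (x - x₀)` with `A = Df_t(z) ∈ D_t`; with `u = C₀ (x - x₀)`
its squared length is the Rayleigh quotient `uᵀ S u` of `S = (C₀ᵀ)⁻¹ Aᵀ M₁ A C₀⁻¹`, hence at most
`λ_max(S) |u|² ≤ Λ² ‖x - x₀‖²_{M₀}`. The mean value inequality then gives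
`‖f_t(x) - f_t(x₀)‖_{M₁} ≤ Λ ‖x - x₀‖_{M₀} ≤ Λ δ₀`.
-/

open Matrix

/-- Largest eigenvalue of a real matrix, as the supremum of its real spectrum. -/
noncomputable def lambdaMax {n : ℕ} (S : Matrix (Fin n) (Fin n) ℝ) : ℝ :=
  sSup (spectrum ℝ S)

/-- Weighted `M`-norm of a vector: `‖y‖_M = sqrt (yᵀ M y)`. -/
noncomputable def Mnorm {n : ℕ} (M : Matrix (Fin n) (Fin n) ℝ) (y : Fin n → ℝ) : ℝ :=
  Real.sqrt (y ⬝ᵥ (M *ᵥ y))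

/-- Closed ball of radius `δ` about `x` in the `M`-norm. -/
def Mball {n : ℕ} (M : Matrix (Fin n) (Fin n) ℝ) (x : Fin n → ℝ) (δ : ℝ) :
    Set (Fin n → ℝ) :=
  {y | Mnorm M (y - x) ≤ δ}

/-- Jacobian matrix of `f : ℝⁿ → ℝⁿ` at `x`. -/
noncomputable def jacobian {n : ℕ} (f : (Fin n → ℝ) → (Fin n → ℝ)) (x : Fin n → ℝ) :
    Matrix (Fin n) (Fin n) ℝ :=
  LinearMap.toMatrix' (fderiv ℝ f x).toLinearMap

open Set

theorem dotProduct_transpose_mul_mul_mulVec {m R : Type*} [Fintype m] [CommSemiring R]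
    (B M : Matrix m m R) (x : m → R) :
    x ⬝ᵥ ((Bᵀ * M * B) *ᵥ x) = (B *ᵥ x) ⬝ᵥ (M *ᵥ (B *ᵥ x)) := by
  rw [← mulVec_mulVec, ← mulVec_mulVec, dotProduct_mulVec, vecMul_transpose]

theorem Mnorm_transpose_mul_self {n : ℕ} (C : Matrix (Fin n) (Fin n) ℝ) (y : Fin n → ℝ) :
    Mnorm (Cᵀ * C) y = Real.sqrt ((C *ᵥ y) ⬝ᵥ (C *ᵥ y)) := by
  rw [Mnorm, ← mulVec_mulVec, dotProduct_mulVec, vecMul_transpose]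

noncomputable def mulVecEuclidean {n : ℕ} (C : Matrix (Fin n) (Fin n) ℝ) :
    (Fin n → ℝ) →L[ℝ] EuclideanSpace ℝ (Fin n) :=
  (EuclideanSpace.equiv (Fin n) ℝ).symm.toContinuousLinearMap ∘L
    C.mulVecLin.toContinuousLinearMap

theorem Mnorm_eq_norm_mulVecEuclidean {n : ℕ} {M C : Matrix (Fin n) (Fin n) ℝ}
    (hCM : Cᵀ * C = M) (y : Fin n → ℝ) : Mnorm M y = ‖mulVecEuclidean C y‖ := by
  rw [← hCM, Mnorm_transpose_mul_self, norm_eq_sqrt_real_inner, dotProduct_comm]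
  rfl

theorem convex_Mball {n : ℕ} {M C : Matrix (Fin n) (Fin n) ℝ} (hCM : Cᵀ * C = M)
    (x : Fin n → ℝ) (δ : ℝ) : Convex ℝ (Mball M x δ) := by
  have : Mball M x δ = mulVecEuclidean C ⁻¹' Metric.closedBall (mulVecEuclidean C x) δ := by
    ext y
    simp only [Mball, mem_ofPred_eq, mem_preimage, Metric.mem_closedBall, dist_eq_norm,
      ← map_sub, Mnorm_eq_norm_mulVecEuclidean hCM]
  rw [this]
  exact (convex_closedBall _ _).linear_preimage (mulVecEuclidean C).toLinearMap

open scoped MatrixOrder in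
theorem dotProduct_mulVec_le_lambdaMax_mul {n : ℕ} {S : Matrix (Fin n) (Fin n) ℝ}
    (hS : S.IsHermitian) (v : Fin n → ℝ) : v ⬝ᵥ (S *ᵥ v) ≤ lambdaMax S * (v ⬝ᵥ v) := by
  -- In the Loewner order, `S ≤ λ_max(S) • 1` by the continuous functional calculus.
  have hle : S ≤ algebraMap ℝ _ (lambdaMax S) :=
    le_algebraMap_of_spectrum_le (fun _ hx => le_csSup finite_real_spectrum.bddAbove hx) hS
  simpa only [star_trivial, Algebra.algebraMap_eq_smul_one, sub_mulVec, smul_mulVec, one_mulVec,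
    dotProduct_sub, dotProduct_smul, smul_eq_mul, sub_nonneg] using
    (Matrix.le_iff.mp hle).dotProduct_mulVec_nonneg v

theorem Mnorm_mulVec_le {n : ℕ} {M₀ M₁ C₀ A : Matrix (Fin n) (Fin n) ℝ} (hC₀ : IsUnit C₀.det)
    (hCM₀ : C₀ᵀ * C₀ = M₀) (hM₁ : M₁.IsHermitian) {Λ : ℝ}
    (hΛ : Real.sqrt (lambdaMax ((C₀ᵀ)⁻¹ * Aᵀ * M₁ * A * C₀⁻¹)) ≤ Λ) (v : Fin n → ℝ) :
    Mnorm M₁ (A *ᵥ v) ≤ Λ * Mnorm M₀ v := by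
  set S := (C₀ᵀ)⁻¹ * Aᵀ * M₁ * A * C₀⁻¹
  set B := A * C₀⁻¹
  set u := C₀ *ᵥ v
  have hSB : S = Bᵀ * M₁ * B := by
    simp only [S, B, transpose_mul, transpose_nonsing_inv, Matrix.mul_assoc]
  have hS : S.IsHermitian := by
    simpa [hSB, conjTranspose_eq_transpose_of_trivial] using
      isHermitian_conjTranspose_mul_mul B hM₁
  have hv : A *ᵥ v = B *ᵥ u := by
    rw [mulVec_mulVec, Matrix.mul_assoc, nonsing_inv_mul C₀ hC₀, Matrix.mul_one]
  have hquad : A *ᵥ v ⬝ᵥ M₁ *ᵥ (A *ᵥ v) = u ⬝ᵥ S *ᵥ u := by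
    rw [hSB, dotProduct_transpose_mul_mul_mulVec, hv]
  have hM₀ : Mnorm M₀ v = Real.sqrt (u ⬝ᵥ u) := by
    rw [← hCM₀, Mnorm_transpose_mul_self]
  calc Mnorm M₁ (A *ᵥ v) = Real.sqrt (u ⬝ᵥ S *ᵥ u) := by rw [Mnorm, hquad]
    _ ≤ Real.sqrt (lambdaMax S * (u ⬝ᵥ u)) :=
      Real.sqrt_le_sqrt (dotProduct_mulVec_le_lambdaMax_mul hS u)
    _ = Real.sqrt (lambdaMax S) * Mnorm M₀ v := by
      rw [Real.sqrt_mul' _ (by simpa using dotProduct_star_self_nonneg u), hM₀]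
    _ ≤ Λ * Mnorm M₀ v := mul_le_mul_of_nonneg_right hΛ (Real.sqrt_nonneg _)

theorem jacobian_mulVec {n : ℕ} (f : (Fin n → ℝ) → (Fin n → ℝ)) (x v : Fin n → ℝ) :
    jacobian f x *ᵥ v = fderiv ℝ f x v := by
  rw [jacobian, ← Matrix.toLin'_apply, Matrix.toLin'_toMatrix']
  rfl

theorem Mnorm_sub_le_of_jacobian_le {n : ℕ} {M₀ M₁ C₁ : Matrix (Fin n) (Fin n) ℝ}
    (hCM₁ : C₁ᵀ * C₁ = M₁) {f : (Fin n → ℝ) → (Fin n → ℝ)} {X : Set (Fin n → ℝ)}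
    (hX : Convex ℝ X) (hf : ∀ z ∈ X, DifferentiableAt ℝ f z) {Λ : ℝ}
    (hJ : ∀ z ∈ X, ∀ v, Mnorm M₁ (jacobian f z *ᵥ v) ≤ Λ * Mnorm M₀ v)
    {x y : Fin n → ℝ} (hx : x ∈ X) (hy : y ∈ X) :
    Mnorm M₁ (f y - f x) ≤ Λ * Mnorm M₀ (y - x) := by
  set L := mulVecEuclidean C₁
  set γ : ℝ → Fin n → ℝ := fun s => x + s • (y - x)
  have hγX : ∀ s ∈ Icc (0 : ℝ) 1, γ s ∈ X := fun s hs => hX.add_smul_sub_mem hx hy hs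
  have hderiv : ∀ s ∈ Icc (0 : ℝ) 1, HasDerivWithinAt (fun s => L (f (γ s)))
      (L (jacobian f (γ s) *ᵥ (y - x))) (Icc 0 1) s := by
    intro s hs
    have hγ : HasDerivAt γ (y - x) s := by
      simpa only [id, one_smul] using ((hasDerivAt_id s).smul_const (y - x)).const_add x
    rw [jacobian_mulVec]
    exact (L.hasFDerivAt.comp_hasDerivAt s
      ((hf _ (hγX s hs)).hasFDerivAt.comp_hasDerivAt s hγ)).hasDerivWithinAt
  have hbound : ∀ s ∈ Ico (0 : ℝ) 1, ‖L (jacobian f (γ s) *ᵥ (y - x))‖ ≤ Λ * Mnorm M₀ (y - x) :=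
    fun s hs => (Mnorm_eq_norm_mulVecEuclidean hCM₁ _).symm.trans_le
      (hJ _ (hγX s (Ico_subset_Icc_self hs)) _)
  rw [Mnorm_eq_norm_mulVecEuclidean hCM₁, map_sub]
  simpa [γ] using
    norm_image_sub_le_of_norm_deriv_le_segment_01' hderiv hbound

theorem ball_propagation_cont_general {n : ℕ} (M₀ M₁ C₀ C₁ : Matrix (Fin n) (Fin n) ℝ)
    (hC₀ : IsUnit C₀.det)
    (hCM₀ : C₀ᵀ * C₀ = M₀) (hCM₁ : C₁ᵀ * C₁ = M₁)
    (t₀ t₁ : ℝ)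
    (f : ℝ → (Fin n → ℝ) → (Fin n → ℝ))
    (hf : ∀ t ∈ Set.Icc t₀ t₁, ContDiff ℝ 1 (f t))
    (x₀ : Fin n → ℝ) (δ₀ : ℝ)
    (D : ℝ → Set (Matrix (Fin n) (Fin n) ℝ))
    (hD : ∀ t ∈ Set.Icc t₀ t₁, ∀ x ∈ Mball M₀ x₀ δ₀, jacobian (f t) x ∈ D t)
    (Λ : ℝ)
    (hΛ : ∀ t ∈ Set.Icc t₀ t₁, ∀ A ∈ D t,
      Real.sqrt (lambdaMax ((C₀ᵀ)⁻¹ * Aᵀ * M₁ * A * C₀⁻¹)) ≤ Λ) :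
    ∀ t ∈ Set.Icc t₀ t₁, ∀ x ∈ Mball M₀ x₀ δ₀,
      f t x ∈ Mball M₁ (f t x₀) (Λ * δ₀) := by
  intro t ht x hx
  have hM₁ : M₁.IsHermitian := hCM₁ ▸ isHermitian_conjTranspose_mul_self C₁
  have hΛ_nonneg : 0 ≤ Λ := (Real.sqrt_nonneg _).trans (hΛ t ht _ (hD t ht x hx))
  have hx₀ : x₀ ∈ Mball M₀ x₀ δ₀ := by
    simpa [Mball, Mnorm] using (Real.sqrt_nonneg _).trans hx
  have hstretch := Mnorm_sub_le_of_jacobian_le hCM₁ (convex_Mball hCM₀ x₀ δ₀)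
    (fun z _ => (hf t ht).differentiable one_ne_zero z)
    (fun z hz => Mnorm_mulVec_le hC₀ hCM₀ hM₁ (hΛ t ht _ (hD t ht z hz))) hx₀ hx
  exact hstretch.trans (mul_le_mul_of_nonneg_left hx hΛ_nonneg)

/-- continuous-time ball propagation (Theorem `thmmaincont`).
`f t` is the time-`t` solution map; if the Jacobians over the initial ball lie
in `D t` for every `t ∈ [t₀,t₁]` and `Λ` bounds the stretching factor of every
member of every `D t`, then at every intermediate time the reach set is
contained in the `M₁`-ball of radius `Λ·δ₀`. -/
theorem ball_propagation_cont {n : ℕ} (M₀ M₁ C₀ C₁ : Matrix (Fin n) (Fin n) ℝ)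
    (hM₀ : M₀.PosDef) (hM₁ : M₁.PosDef)
    (hC₀ : IsUnit C₀.det) (hC₁ : IsUnit C₁.det)
    (hCM₀ : C₀ᵀ * C₀ = M₀) (hCM₁ : C₁ᵀ * C₁ = M₁)
    (t₀ t₁ : ℝ) (ht : t₀ ≤ t₁)
    (f : ℝ → (Fin n → ℝ) → (Fin n → ℝ))
    (hf : ∀ t ∈ Set.Icc t₀ t₁, ContDiff ℝ 1 (f t))
    (x₀ : Fin n → ℝ) (δ₀ : ℝ) (hδ₀ : 0 < δ₀)
    (D : ℝ → Set (Matrix (Fin n) (Fin n) ℝ))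
    (hD : ∀ t ∈ Set.Icc t₀ t₁, ∀ x ∈ Mball M₀ x₀ δ₀, jacobian (f t) x ∈ D t)
    (Λ : ℝ) (hΛpos : 0 < Λ)
    (hΛ : ∀ t ∈ Set.Icc t₀ t₁, ∀ A ∈ D t,
      Real.sqrt (lambdaMax ((C₀ᵀ)⁻¹ * Aᵀ * M₁ * A * C₀⁻¹)) ≤ Λ) :
    ∀ t ∈ Set.Icc t₀ t₁, ∀ x ∈ Mball M₀ x₀ δ₀,
      f t x ∈ Mball M₁ (f t x₀) (Λ * δ₀) :=
  ball_propagation_cont_general M₀ M₁ C₀ C₁ hC₀ hCM₀ hCM₁ t₀ t₁ f hf x₀ δ₀ D hD Λ hΛ
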